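/- arXiv:1710.01290 — 3 statements merged into one kernel-verified Lean document; each statement's English description precedes it below -/
import Mathlib

section
/- If a group G can be written as a finite union of cosets G = ∪_{1≤i≤α, 1≤j≤β} c_{ij} H_i, where c_{ij} ∈ G and H_1, ..., H_α are subgroups of G, then at least one subgroup H_i has finite index in G. -/
open Pointwise

/-- Neumann covering lemma (Taimanov's form): if a group `G` is covered by
finitely many cosets `c i j • H i` of subgroups `H i`, then some `H i` has
finite index in `G`. -/
theorem stmt0 {G : Type*} [Group G] (α β : ℕ) (H : Fin α → Subgroup G)
    (c : Fin α → Fin β → G)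
    (hcover : ∀ g : G, ∃ (i : Fin α) (j : Fin β), (c i j)⁻¹ * g ∈ H i) :
    ∃ i : Fin α, (H i).FiniteIndex := by
  have hcovers : ⋃ p ∈ (Finset.univ : Finset (Fin α × Fin β)),
      (c p.1 p.2) • ((H p.1 : Subgroup G) : Set G) = Set.univ := by
    ext g
    simp only [Set.mem_iUnion, Set.mem_univ, iff_true, Finset.mem_univ,
      exists_prop, true_and]
    obtain ⟨i, j, h⟩ := hcover g
    exact ⟨(i, j), by simpa [Set.mem_smul_set_iff_inv_smul_mem] using h⟩
  obtain ⟨k, -, hk⟩ := Subgroup.exists_finiteIndex_of_leftCoset_cover hcovers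
  exact ⟨k.1, hk⟩
end

section
/- The map (u^n, a) ↦ (n·log u, a, σ(a)) embeds the semidirect product ⟨u⟩ ⋉ I into the group Sol, where Sol is ℝ³ with multiplication (x,y,z)*(x',y',z') = (x+x', eˣ y' + y, e^{−x} z' + z), I is an additive subgroup of ℝ closed under multiplication by u and u^{-1}, u > 0, u ≠ 1 a real number with σ-conjugate action meaning σ : I → ℝ is an additive map satisfying σ(u·a) = u^{−1}·σ(a); i.e., this map is an injective group homomorphism. -/
/-- Sol multiplication on ℝ³. -/
noncomputable def solMul (a b : ℝ × ℝ × ℝ) : ℝ × ℝ × ℝ :=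
  (a.1 + b.1, Real.exp a.1 * b.2.1 + a.2.1, Real.exp (-a.1) * b.2.2 + a.2.2)

lemma aux_zpow (u : ℝ) (hu : 0 < u) (I : AddSubgroup ℝ)
    (hI : ∀ a ∈ I, u * a ∈ I ∧ u⁻¹ * a ∈ I) (σ : ℝ → ℝ)
    (hσu : ∀ a ∈ I, σ (u * a) = u⁻¹ * σ a) (n : ℤ) :
    ∀ a ∈ I, u ^ n * a ∈ I ∧ σ (u ^ n * a) = u ^ (-n) * σ a := by
  have hune : u ≠ 0 := ne_of_gt hu
  have hinv : ∀ a ∈ I, σ (u⁻¹ * a) = u * σ a := by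
    intro a ha
    have h := hσu (u⁻¹ * a) (hI a ha).2
    rw [← mul_assoc, mul_inv_cancel₀ hune, one_mul] at h
    have := congrArg (fun x => u * x) h
    simp only [← mul_assoc, mul_inv_cancel₀ hune, one_mul] at this
    exact this.symm
  induction n using Int.induction_on with
  | zero => intro a ha; simp [ha]
  | succ k ih =>
    intro a ha
    obtain ⟨h1, h2⟩ := ih a ha
    have key : u ^ ((k : ℤ) + 1) * a = u * (u ^ (k:ℤ) * a) := by
      rw [zpow_add_one₀ hune]; ring
    constructor
    · rw [key]; exact (hI _ h1).1
    · rw [key, hσu _ h1, h2, ← mul_assoc, show -((k:ℤ)+1) = -(k:ℤ) + (-1) by ring,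
        zpow_add₀ hune, zpow_neg_one, mul_comm (u ^ (-(k:ℤ)))]
  | pred k ih =>
    intro a ha
    obtain ⟨h1, h2⟩ := ih a ha
    have key : u ^ (-(k : ℤ) - 1) * a = u⁻¹ * (u ^ (-(k:ℤ)) * a) := by
      rw [zpow_sub_one₀ hune]; ring
    constructor
    · rw [key]; exact (hI _ h1).2
    · rw [key, hinv _ h1, h2, ← mul_assoc, show -(-(k:ℤ) - 1) = (k:ℤ) + 1 by ring,
        zpow_add_one₀ hune, mul_comm (u ^ ((k:ℤ)))]
      simp

/-- The map `(uⁿ, a) ↦ (n·log u, a, σ(a))` is an injective group homomorphism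
from the semidirect product `⟨u⟩ ⋉ I` (with product
`(uⁿ,a)(uᵐ,b) = (uⁿ⁺ᵐ, uⁿ·b + a)`) into `Sol`. -/
theorem stmt10 (u : ℝ) (hu : 0 < u) (hu1 : u ≠ 1) (I : AddSubgroup ℝ)
    (hI : ∀ a ∈ I, u * a ∈ I ∧ u⁻¹ * a ∈ I) (σ : ℝ → ℝ)
    (hadd : ∀ a ∈ I, ∀ b ∈ I, σ (a + b) = σ a + σ b)
    (hσu : ∀ a ∈ I, σ (u * a) = u⁻¹ * σ a) :
    (∀ (n m : ℤ), ∀ a ∈ I, ∀ b ∈ I,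
      solMul ((n : ℝ) * Real.log u, a, σ a) ((m : ℝ) * Real.log u, b, σ b)
        = (((n + m : ℤ) : ℝ) * Real.log u, u ^ n * b + a, σ (u ^ n * b + a))) ∧
    (∀ (n m : ℤ), ∀ a ∈ I, ∀ b ∈ I,
      (((n : ℝ) * Real.log u, a, σ a) : ℝ × ℝ × ℝ)
          = ((m : ℝ) * Real.log u, b, σ b) → n = m ∧ a = b) := by
  have hune : u ≠ 0 := ne_of_gt hu
  have hexp : ∀ n : ℤ, Real.exp ((n : ℝ) * Real.log u) = u ^ n := by
    intro n
    rw [← Real.rpow_intCast u n, Real.rpow_def_of_pos hu, mul_comm]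
  constructor
  · intro n m a ha b hb
    obtain ⟨hmem, hσn⟩ := aux_zpow u hu I hI σ hσu n b hb
    simp only [solMul]
    refine Prod.ext ?_ (Prod.ext ?_ ?_)
    · push_cast; ring
    · simp [hexp n]
    · rw [hadd _ hmem _ ha, hσn]
      have : Real.exp (-((n:ℝ) * Real.log u)) = u ^ (-n) := by
        rw [show -((n:ℝ) * Real.log u) = ((-n : ℤ) : ℝ) * Real.log u by push_cast; ring]
        exact hexp (-n)
      simp [this]
  · intro n m a ha b hb h
    have h1 : (n : ℝ) * Real.log u = (m : ℝ) * Real.log u := congrArg Prod.fst h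
    have hlog : Real.log u ≠ 0 := Real.log_ne_zero_of_pos_of_ne_one hu hu1
    have hn : (n : ℝ) = m := mul_right_cancel₀ hlog h1
    exact ⟨by exact_mod_cast hn, congrArg (fun p => p.2.1) h⟩
end

section
/- The orthogonal automorphism group of the standard left-invariant metric on Sol, i.e., the group of linear maps of ℝ³ that are automorphisms of the Sol Lie algebra (bracket [(a,b,c),(a',b',c')] = (0,ab'−a'b,−(ac'−a'c))) and orthogonal for the standard inner product, is a group of order 8 isomorphic to the dihedral group D₄, generated by diag(1,±1,±1) and the maps (a,b,c) ↦ (−a, ±c, ±b). -/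
set_option maxHeartbeats 1000000

/-- The `sol` Lie bracket on ℝ³. -/
def solBr (v w : ℝ × ℝ × ℝ) : ℝ × ℝ × ℝ :=
  (0, v.1 * w.2.1 - w.1 * v.2.1, -(v.1 * w.2.2 - w.1 * v.2.2))

/-- The standard inner product on ℝ³. -/
def dot3 (p v : ℝ × ℝ × ℝ) : ℝ := p.1 * v.1 + p.2.1 * v.2.1 + p.2.2 * v.2.2

/-- An orthogonal automorphism of the `sol` Lie algebra. -/
def IsOrthoAut (T : (ℝ × ℝ × ℝ) →ₗ[ℝ] ℝ × ℝ × ℝ) : Prop :=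
  Function.Bijective T ∧ (∀ v w, T (solBr v w) = solBr (T v) (T w)) ∧
    ∀ v w, dot3 (T v) (T w) = dot3 v w

def autA (ε δ : ℝ) : (ℝ × ℝ × ℝ) →ₗ[ℝ] ℝ × ℝ × ℝ where
  toFun v := (v.1, ε * v.2.1, δ * v.2.2)
  map_add' v w := by refine Prod.ext ?_ (Prod.ext ?_ ?_) <;> simp <;> ring
  map_smul' c v := by refine Prod.ext ?_ (Prod.ext ?_ ?_) <;> simp <;> ring

def autB (ε δ : ℝ) : (ℝ × ℝ × ℝ) →ₗ[ℝ] ℝ × ℝ × ℝ where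
  toFun v := (-v.1, ε * v.2.2, δ * v.2.1)
  map_add' v w := by refine Prod.ext ?_ (Prod.ext ?_ ?_) <;> simp <;> ring
  map_smul' c v := by refine Prod.ext ?_ (Prod.ext ?_ ?_) <;> simp <;> ring

@[simp] lemma autA_apply (ε δ : ℝ) (v : ℝ × ℝ × ℝ) :
    autA ε δ v = (v.1, ε * v.2.1, δ * v.2.2) := rfl
@[simp] lemma autB_apply (ε δ : ℝ) (v : ℝ × ℝ × ℝ) :
    autB ε δ v = (-v.1, ε * v.2.2, δ * v.2.1) := rfl

lemma compAA (ε δ ε' δ' : ℝ) : autA ε δ ∘ₗ autA ε' δ' = autA (ε*ε') (δ*δ') := by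
  apply LinearMap.ext; intro v; simp [Prod.ext_iff]; constructor <;> ring
lemma compAB (ε δ ε' δ' : ℝ) : autA ε δ ∘ₗ autB ε' δ' = autB (ε*ε') (δ*δ') := by
  apply LinearMap.ext; intro v; simp [Prod.ext_iff]; constructor <;> ring
lemma compBA (ε δ ε' δ' : ℝ) : autB ε δ ∘ₗ autA ε' δ' = autB (ε*δ') (δ*ε') := by
  apply LinearMap.ext; intro v; simp [Prod.ext_iff]; constructor <;> ring
lemma compBB (ε δ ε' δ' : ℝ) : autB ε δ ∘ₗ autB ε' δ' = autA (ε*δ') (δ*ε') := by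
  apply LinearMap.ext; intro v; simp [Prod.ext_iff]; constructor <;> ring

lemma autA_ortho (ε δ : ℝ) (hε : ε = 1 ∨ ε = -1) (hδ : δ = 1 ∨ δ = -1) :
    IsOrthoAut (autA ε δ) := by
  refine ⟨?_, ?_, ?_⟩
  · have h : autA ε δ ∘ₗ autA ε δ = LinearMap.id := by
      rw [compAA]
      apply LinearMap.ext; intro v
      rcases hε with rfl | rfl <;> rcases hδ with rfl | rfl <;> simp
    have h1 : Function.LeftInverse (autA ε δ) (autA ε δ) := fun v =>
      congrArg (fun f => f v) (congrArg DFunLike.coe h)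
    exact ⟨h1.injective, h1.surjective⟩
  · intro v w; simp [solBr, Prod.ext_iff]; constructor <;> ring
  · intro v w
    rcases hε with rfl | rfl <;> rcases hδ with rfl | rfl <;> simp [dot3] <;> ring

lemma autB_ortho (ε δ : ℝ) (hε : ε = 1 ∨ ε = -1) (hδ : δ = 1 ∨ δ = -1) :
    IsOrthoAut (autB ε δ) := by
  refine ⟨?_, ?_, ?_⟩
  · have h : autB δ ε ∘ₗ autB ε δ = LinearMap.id := by
      rw [compBB]
      apply LinearMap.ext; intro v
      rcases hε with rfl | rfl <;> rcases hδ with rfl | rfl <;> simp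
    have h' : autB ε δ ∘ₗ autB δ ε = LinearMap.id := by
      rw [compBB]
      apply LinearMap.ext; intro v
      rcases hε with rfl | rfl <;> rcases hδ with rfl | rfl <;> simp
    have h1 : Function.LeftInverse (autB δ ε) (autB ε δ) := fun v =>
      congrArg (fun f => f v) (congrArg DFunLike.coe h)
    have h2 : Function.LeftInverse (autB ε δ) (autB δ ε) := fun v =>
      congrArg (fun f => f v) (congrArg DFunLike.coe h')
    exact ⟨h1.injective, h2.surjective⟩
  · intro v w; simp [solBr, Prod.ext_iff]; constructor <;> ring
  · intro v w
    rcases hε with rfl | rfl <;> rcases hδ with rfl | rfl <;> simp [dot3] <;> ring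

lemma sq1 {x : ℝ} (h : x * x = 1) : x = 1 ∨ x = -1 := by
  rcases mul_eq_zero.1 (show (x - 1) * (x + 1) = 0 by ring_nf; linarith) with h' | h'
  · left; linarith
  · right; linarith

lemma classify (T : (ℝ × ℝ × ℝ) →ₗ[ℝ] ℝ × ℝ × ℝ) (h : IsOrthoAut T) :
    ∃ ε δ : ℝ, (ε = 1 ∨ ε = -1) ∧ (δ = 1 ∨ δ = -1) ∧
      ((∀ v, T v = (v.1, ε * v.2.1, δ * v.2.2)) ∨
       (∀ v, T v = (-v.1, ε * v.2.2, δ * v.2.1))) := by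
  obtain ⟨-, hbr, hdot⟩ := h
  obtain ⟨p, q, r, hP⟩ : ∃ p q r, T (1,0,0) = (p,q,r) := ⟨_,_,_, rfl⟩
  obtain ⟨x2, y2, z2, hQ⟩ : ∃ x y z, T (0,1,0) = (x,y,z) := ⟨_,_,_, rfl⟩
  obtain ⟨x3, y3, z3, hR⟩ : ∃ x y z, T (0,0,1) = (x,y,z) := ⟨_,_,_, rfl⟩
  have hsplit : ∀ v : ℝ × ℝ × ℝ,
      T v = v.1 • (p,q,r) + v.2.1 • (x2,y2,z2) + v.2.2 • (x3,y3,z3) := by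
    intro v
    have hv : v = v.1 • ((1:ℝ),(0:ℝ),(0:ℝ)) + v.2.1 • ((0:ℝ),(1:ℝ),(0:ℝ))
        + v.2.2 • ((0:ℝ),(0:ℝ),(1:ℝ)) := by
      refine Prod.ext ?_ (Prod.ext ?_ ?_) <;> simp
    conv_lhs => rw [hv]
    rw [map_add, map_add, map_smul, map_smul, map_smul, hP, hQ, hR]
  have hb2 := hbr (1,0,0) (0,1,0)
  have hb3 := hbr (1,0,0) (0,0,1)
  have hneg : ((0:ℝ),(0:ℝ),(-1:ℝ)) = -((0:ℝ),(0:ℝ),(1:ℝ)) := by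
    refine Prod.ext ?_ (Prod.ext ?_ ?_) <;> simp
  rw [show solBr (1,0,0) (0,1,0) = ((0:ℝ),(1:ℝ),(0:ℝ)) from by
      simp [solBr], hP, hQ] at hb2
  rw [show solBr (1,0,0) (0,0,1) = ((0:ℝ),(0:ℝ),(-1:ℝ)) from by
      simp [solBr], hneg, map_neg, hP, hR] at hb3
  simp only [solBr, Prod.mk.injEq, Prod.neg_mk] at hb2 hb3
  obtain ⟨e1, e2, e3⟩ := hb2
  obtain ⟨f1, f2, f3⟩ := hb3
  have d11 := hdot (1,0,0) (1,0,0)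
  have d22 := hdot (0,1,0) (0,1,0)
  have d33 := hdot (0,0,1) (0,0,1)
  rw [hP] at d11; rw [hQ] at d22; rw [hR] at d33
  norm_num [dot3] at d11 d22 d33
  have hx2 : x2 = 0 := e1
  have hx3 : x3 = 0 := by linarith [f1]
  rw [hx2] at e2 e3 d22
  rw [hx3] at f2 f3 d33
  by_cases hy : y2 = 0
  · rw [hy] at d22
    have hz : z2 * z2 = 1 := by linarith
    have hzne : z2 ≠ 0 := fun h0 => by rw [h0] at hz; norm_num at hz
    have hp : p = -1 := by
      have h2 : z2 * (1 + p) = 0 := by ring_nf; nlinarith [e3]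
      rcases mul_eq_zero.1 h2 with h' | h'
      · exact absurd h' hzne
      · linarith
    have hq : q = 0 := mul_self_eq_zero.mp (by nlinarith [mul_self_nonneg q, mul_self_nonneg r])
    have hr : r = 0 := mul_self_eq_zero.mp (by nlinarith [mul_self_nonneg q, mul_self_nonneg r])
    have hz3 : z3 = 0 := by rw [hp] at f3; linarith
    have hy3 : y3 * y3 = 1 := by rw [hz3] at d33; linarith
    refine ⟨y3, z2, sq1 hy3, sq1 hz, Or.inr fun v => ?_⟩
    rw [hsplit v, hp, hq, hr, hx2, hy, hx3, hz3]
    refine Prod.ext ?_ (Prod.ext ?_ ?_) <;> simp <;> ring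
  · have hp : p = 1 := by
      have h2 : y2 * (1 - p) = 0 := by ring_nf; nlinarith [e2]
      rcases mul_eq_zero.1 h2 with h' | h'
      · exact absurd h' hy
      · linarith
    have hq : q = 0 := mul_self_eq_zero.mp (by nlinarith [mul_self_nonneg q, mul_self_nonneg r])
    have hr : r = 0 := mul_self_eq_zero.mp (by nlinarith [mul_self_nonneg q, mul_self_nonneg r])
    have hz2 : z2 = 0 := by rw [hp] at e3; linarith
    have hy2 : y2 * y2 = 1 := by rw [hz2] at d22; linarith
    have hy3 : y3 = 0 := by rw [hp] at f2; linarith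
    have hz3 : z3 * z3 = 1 := by rw [hy3] at d33; linarith
    refine ⟨y2, z3, sq1 hy2, sq1 hz3, Or.inl fun v => ?_⟩
    rw [hsplit v, hp, hq, hr, hx2, hz2, hx3, hy3]
    refine Prod.ext ?_ (Prod.ext ?_ ?_) <;> simp <;> ring

lemma z4a : (4:ZMod 4) = 0 := by decide
lemma z4b : (5:ZMod 4) = 1 := by decide
lemma z4c : (6:ZMod 4) = 2 := by decide
lemma z4d : (-1:ZMod 4) = 3 := by decide
lemma z4e : (-2:ZMod 4) = 2 := by decide
lemma z4f : (-3:ZMod 4) = 1 := by decide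

def Rv : ZMod 4 → (ℝ × ℝ × ℝ) →ₗ[ℝ] ℝ × ℝ × ℝ :=
  ![autA 1 1, autB 1 (-1), autA (-1) (-1), autB (-1) 1]
def Sv : ZMod 4 → (ℝ × ℝ × ℝ) →ₗ[ℝ] ℝ × ℝ × ℝ :=
  ![autA 1 (-1), autB 1 1, autA (-1) 1, autB (-1) (-1)]

def fD : DihedralGroup 4 → (ℝ × ℝ × ℝ) →ₗ[ℝ] ℝ × ℝ × ℝ
  | .r i => Rv i
  | .sr i => Sv i

lemma fD_mul (g h : DihedralGroup 4) : fD (g * h) = fD g ∘ₗ fD h := by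
  cases g with
  | r i =>
    cases h with
    | r j =>
      rw [DihedralGroup.r_mul_r]
      show Rv (i + j) = Rv i ∘ₗ Rv j
      fin_cases i <;> fin_cases j <;>
        first | rfl | (simp [z4a,z4b,z4c,z4d,z4e,z4f, Rv, compAA, compAB, compBA, compBB] <;>
          first | rfl | norm_num)
    | sr j =>
      rw [DihedralGroup.r_mul_sr]
      show Sv (j - i) = Rv i ∘ₗ Sv j
      fin_cases i <;> fin_cases j <;>
        first | rfl | (simp [z4a,z4b,z4c,z4d,z4e,z4f, Rv, Sv, compAA, compAB, compBA, compBB] <;>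
          first | rfl | norm_num)
  | sr i =>
    cases h with
    | r j =>
      rw [DihedralGroup.sr_mul_r]
      show Sv (i + j) = Sv i ∘ₗ Rv j
      fin_cases i <;> fin_cases j <;>
        first | rfl | (simp [z4a,z4b,z4c,z4d,z4e,z4f, Rv, Sv, compAA, compAB, compBA, compBB] <;>
          first | rfl | norm_num)
    | sr j =>
      rw [DihedralGroup.sr_mul_sr]
      show Rv (j - i) = Sv i ∘ₗ Sv j
      fin_cases i <;> fin_cases j <;>
        first | rfl | (simp [z4a,z4b,z4c,z4d,z4e,z4f, Rv, Sv, compAA, compAB, compBA, compBB] <;>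
          first | rfl | norm_num)

lemma fD_inj : Function.Injective fD := by
  intro g g' hgg
  have h111 := DFunLike.congr_fun hgg ((1:ℝ),(1:ℝ),(1:ℝ))
  cases g with
  | r i =>
    cases g' with
    | r j =>
      fin_cases i <;> fin_cases j <;>
        first | rfl | (exfalso; simp [fD, Rv, Prod.ext_iff] at h111 <;> norm_num at h111)
    | sr j =>
      fin_cases i <;> fin_cases j <;>
        (exfalso; simp [fD, Rv, Sv, Prod.ext_iff] at h111 <;> norm_num at h111)
  | sr i =>
    cases g' with
    | r j =>
      fin_cases i <;> fin_cases j <;>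
        (exfalso; simp [fD, Rv, Sv, Prod.ext_iff] at h111 <;> norm_num at h111)
    | sr j =>
      fin_cases i <;> fin_cases j <;>
        first | rfl | (exfalso; simp [fD, Sv, Prod.ext_iff] at h111 <;> norm_num at h111)

lemma fD_ortho (g : DihedralGroup 4) : IsOrthoAut (fD g) := by
  cases g with
  | r i =>
    fin_cases i <;>
      first
        | exact autA_ortho _ _ (by norm_num) (by norm_num)
        | exact autB_ortho _ _ (by norm_num) (by norm_num)
  | sr i =>
    fin_cases i <;>
      first
        | exact autA_ortho _ _ (by norm_num) (by norm_num)
        | exact autB_ortho _ _ (by norm_num) (by norm_num)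

/-- The orthogonal automorphisms of `sol` are exactly the eight maps
`(a,b,c) ↦ (a, ±b, ±c)` and `(a,b,c) ↦ (−a, ±c, ±b)`, and under composition
they form a group isomorphic to the dihedral group of order 8. -/
theorem stmt18 :
    (∀ T : (ℝ × ℝ × ℝ) →ₗ[ℝ] ℝ × ℝ × ℝ, IsOrthoAut T ↔
      ∃ ε δ : ℝ, (ε = 1 ∨ ε = -1) ∧ (δ = 1 ∨ δ = -1) ∧
        ((∀ v, T v = (v.1, ε * v.2.1, δ * v.2.2)) ∨
         (∀ v, T v = (-v.1, ε * v.2.2, δ * v.2.1)))) ∧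
    ∃ e : DihedralGroup 4 ≃ {T : (ℝ × ℝ × ℝ) →ₗ[ℝ] ℝ × ℝ × ℝ // IsOrthoAut T},
      ∀ g h : DihedralGroup 4, (e (g * h)).1 = (e g).1 ∘ₗ (e h).1 := by
  constructor
  · intro T
    constructor
    · exact classify T
    · rintro ⟨ε, δ, hε, hδ, h | h⟩
      · have hT : T = autA ε δ := LinearMap.ext fun v => by rw [h v]; rfl
        rw [hT]; exact autA_ortho ε δ hε hδ
      · have hT : T = autB ε δ := LinearMap.ext fun v => by rw [h v]; rfl
        rw [hT]; exact autB_ortho ε δ hε hδ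
  · have hbij : Function.Bijective (fun g => (⟨fD g, fD_ortho g⟩ :
        {T : (ℝ × ℝ × ℝ) →ₗ[ℝ] ℝ × ℝ × ℝ // IsOrthoAut T})) := by
      constructor
      · intro g g' hgg
        exact fD_inj (congrArg Subtype.val hgg)
      · rintro ⟨T, hT⟩
        obtain ⟨ε, δ, hε, hδ, hform⟩ := classify T hT
        rcases hε with rfl | rfl <;> rcases hδ with rfl | rfl <;>
          rcases hform with h | h
        · exact ⟨.r 0, Subtype.ext (LinearMap.ext fun v => by rw [h v]; rfl)⟩
        · exact ⟨.sr 1, Subtype.ext (LinearMap.ext fun v => by rw [h v]; rfl)⟩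
        · exact ⟨.sr 0, Subtype.ext (LinearMap.ext fun v => by rw [h v]; rfl)⟩
        · exact ⟨.r 1, Subtype.ext (LinearMap.ext fun v => by rw [h v]; rfl)⟩
        · exact ⟨.sr 2, Subtype.ext (LinearMap.ext fun v => by rw [h v]; rfl)⟩
        · exact ⟨.r 3, Subtype.ext (LinearMap.ext fun v => by rw [h v]; rfl)⟩
        · exact ⟨.r 2, Subtype.ext (LinearMap.ext fun v => by rw [h v]; rfl)⟩
        · exact ⟨.sr 3, Subtype.ext (LinearMap.ext fun v => by rw [h v]; rfl)⟩
    exact ⟨Equiv.ofBijective _ hbij, fun g h => fD_mul g h⟩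
end
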